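/- arXiv:1807.05910 — 2 statements merged into one kernel-verified Lean document; each statement's English description precedes it below -/
import Mathlib

section
/- (Uniqueness for the boundary-value ODE.) Let c > 0. Suppose y₁, y₂ : [0, c] → ℝ are twice continuously differentiable, strictly positive on [0, c], and each y ∈ {y₁, y₂} satisfies y''(x) = −2/(c·y(x)) + y(x) for all x ∈ [0, c], together with the boundary conditions y'(0) = y(0) and y'(c) = −y(c). Then y₁ = y₂ on [0, c]. -/
/-- **Uniqueness for the boundary-value ODE** `y'' = −2/(c y) + y` on `[0, c]`
with boundary conditions `y'(0) = y(0)`, `y'(c) = −y(c)`, among strictly positive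
twice continuously differentiable functions. -/
theorem ode_bvp_unique (c : ℝ) (hc : 0 < c)
    (y₁ y₁' y₁'' y₂ y₂' y₂'' : ℝ → ℝ)
    (h₁d : ∀ x ∈ Set.Icc (0:ℝ) c, HasDerivWithinAt y₁ (y₁' x) (Set.Icc 0 c) x)
    (h₁d' : ∀ x ∈ Set.Icc (0:ℝ) c, HasDerivWithinAt y₁' (y₁'' x) (Set.Icc 0 c) x)
    (h₁cont : ContinuousOn y₁'' (Set.Icc 0 c))
    (h₁pos : ∀ x ∈ Set.Icc (0:ℝ) c, 0 < y₁ x)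
    (h₁ode : ∀ x ∈ Set.Icc (0:ℝ) c, y₁'' x = -2 / (c * y₁ x) + y₁ x)
    (h₁bc0 : y₁' 0 = y₁ 0) (h₁bcc : y₁' c = -y₁ c)
    (h₂d : ∀ x ∈ Set.Icc (0:ℝ) c, HasDerivWithinAt y₂ (y₂' x) (Set.Icc 0 c) x)
    (h₂d' : ∀ x ∈ Set.Icc (0:ℝ) c, HasDerivWithinAt y₂' (y₂'' x) (Set.Icc 0 c) x)
    (h₂cont : ContinuousOn y₂'' (Set.Icc 0 c))
    (h₂pos : ∀ x ∈ Set.Icc (0:ℝ) c, 0 < y₂ x)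
    (h₂ode : ∀ x ∈ Set.Icc (0:ℝ) c, y₂'' x = -2 / (c * y₂ x) + y₂ x)
    (h₂bc0 : y₂' 0 = y₂ 0) (h₂bcc : y₂' c = -y₂ c) :
    Set.EqOn y₁ y₂ (Set.Icc 0 c) := by
  have hle : (0:ℝ) ≤ c := hc.le
  set w : ℝ → ℝ := fun x => y₁ x - y₂ x with hwdef
  set w' : ℝ → ℝ := fun x => y₁' x - y₂' x with hw'def
  set w'' : ℝ → ℝ := fun x => y₁'' x - y₂'' x with hw''def
  have hwd : ∀ x ∈ Set.Icc (0:ℝ) c, HasDerivWithinAt w (w' x) (Set.Icc 0 c) x :=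
    fun x hx => (h₁d x hx).sub (h₂d x hx)
  have hwd' : ∀ x ∈ Set.Icc (0:ℝ) c, HasDerivWithinAt w' (w'' x) (Set.Icc 0 c) x :=
    fun x hx => (h₁d' x hx).sub (h₂d' x hx)
  have hwc : ContinuousOn w (Set.Icc 0 c) := fun x hx => (hwd x hx).continuousWithinAt
  have hwc' : ContinuousOn w' (Set.Icc 0 c) := fun x hx => (hwd' x hx).continuousWithinAt
  have hwc'' : ContinuousOn w'' (Set.Icc 0 c) := h₁cont.sub h₂cont
  -- pointwise inequality: w² ≤ w''·w
  have key : ∀ x ∈ Set.Icc (0:ℝ) c, (w x)^2 ≤ w'' x * w x := by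
    intro x hx
    have p1 := h₁pos x hx
    have p2 := h₂pos x hx
    have hw2 : w'' x = 2*(y₁ x - y₂ x)/(c * y₁ x * y₂ x) + (y₁ x - y₂ x) := by
      simp only [hw''def, h₁ode x hx, h₂ode x hx]
      field_simp
      ring
    have hq : 0 ≤ 2*(y₁ x - y₂ x)/(c * y₁ x * y₂ x) * (y₁ x - y₂ x) := by
      have : 2*(y₁ x - y₂ x)/(c * y₁ x * y₂ x) * (y₁ x - y₂ x)
          = 2*(y₁ x - y₂ x)^2/(c * y₁ x * y₂ x) := by ring
      rw [this]; positivity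
    have hwx : w x = y₁ x - y₂ x := rfl
    rw [hw2, hwx]
    nlinarith [hq]
  -- boundary values of w'
  have hb0 : w' 0 = w 0 := by simp [hw'def, hwdef, h₁bc0, h₂bc0]
  have hbc : w' c = -w c := by simp [hw'def, hwdef, h₁bcc, h₂bcc]; ring
  -- integrability
  have hIcc : Set.uIcc (0:ℝ) c = Set.Icc 0 c := Set.uIcc_of_le hle
  have hint1 : IntervalIntegrable (fun x => w'' x * w x + w' x * w' x) MeasureTheory.volume 0 c :=
    ((hwc''.mul hwc).add (hwc'.mul hwc')).intervalIntegrable_of_Icc hle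
  have hint2 : IntervalIntegrable (fun x => (w x)^2 + w' x * w' x) MeasureTheory.volume 0 c :=
    (((hwc.mul hwc).congr (fun x _ => by rw [Pi.mul_apply]; ring)).add (hwc'.mul hwc')).intervalIntegrable_of_Icc hle
  have hintw2 : IntervalIntegrable (fun x => (w x)^2) MeasureTheory.volume 0 c :=
    ((hwc.mul hwc).congr (fun x _ => by rw [Pi.mul_apply]; ring)).intervalIntegrable_of_Icc hle
  have hintw'2 : IntervalIntegrable (fun x => w' x * w' x) MeasureTheory.volume 0 c :=
    (hwc'.mul hwc').intervalIntegrable_of_Icc hle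
  -- FTC for (w'·w)' = w''·w + w'·w'
  have ftc : ∫ x in (0:ℝ)..c, (w'' x * w x + w' x * w' x) = w' c * w c - w' 0 * w 0 := by
    apply intervalIntegral.integral_eq_sub_of_hasDeriv_right_of_le hle
    · exact fun x hx => ((hwd' x hx).mul (hwd x hx)).continuousWithinAt
    · intro x hx
      have hx' : x ∈ Set.Icc (0:ℝ) c := Set.mem_Icc_of_Ioo hx
      exact (((hwd' x hx').mul (hwd x hx')).hasDerivAt
        (Icc_mem_nhds hx.1 hx.2)).hasDerivWithinAt
    · exact hint1
  -- main inequality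
  have hmono : (∫ x in (0:ℝ)..c, ((w x)^2 + w' x * w' x))
      ≤ ∫ x in (0:ℝ)..c, (w'' x * w x + w' x * w' x) := by
    apply intervalIntegral.integral_mono_on hle hint2 hint1
    intro x hx
    have := key x hx
    linarith
  have hsum : (∫ x in (0:ℝ)..c, ((w x)^2 + w' x * w' x))
      = (∫ x in (0:ℝ)..c, (w x)^2) + ∫ x in (0:ℝ)..c, w' x * w' x :=
    intervalIntegral.integral_add hintw2 hintw'2
  have hw'nn : 0 ≤ ∫ x in (0:ℝ)..c, w' x * w' x :=
    intervalIntegral.integral_nonneg hle (fun u _ => mul_self_nonneg _)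
  have hrhs : w' c * w c - w' 0 * w 0 ≤ 0 := by
    rw [hb0, hbc]; nlinarith [sq_nonneg (w c), sq_nonneg (w 0)]
  have hIw2 : (∫ x in (0:ℝ)..c, (w x)^2) ≤ 0 := by
    rw [ftc] at hmono
    rw [hsum] at hmono
    linarith
  -- conclude w = 0 on Icc
  intro x₀ hx₀
  by_contra hne
  have hwne : w x₀ ≠ 0 := sub_ne_zero_of_ne hne
  have hcw : ContinuousWithinAt w (Set.Icc 0 c) x₀ := hwc x₀ hx₀
  have hmem : w ⁻¹' {0}ᶜ ∈ nhdsWithin x₀ (Set.Icc 0 c) :=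
    hcw (isOpen_compl_singleton.mem_nhds hwne)
  rw [Metric.mem_nhdsWithin_iff] at hmem
  obtain ⟨ε, hε, hball⟩ := hmem
  set a : ℝ := max 0 (x₀ - ε/2) with ha
  set b : ℝ := min c (x₀ + ε/2) with hb
  have hx0l := hx₀.1
  have hx0r := hx₀.2
  have hab : a < b := by
    rw [ha, hb]
    simp only [max_lt_iff, lt_min_iff]
    constructor <;> constructor <;> linarith
  have h0a : (0:ℝ) ≤ a := le_max_left _ _
  have hbc' : b ≤ c := min_le_left _ _
  have hsub : Set.Ioo a b ⊆ Metric.ball x₀ ε ∩ Set.Icc 0 c := by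
    intro x hx
    have h1 : a < x := hx.1
    have h2 : x < b := hx.2
    have h3 : x₀ - ε/2 ≤ a := le_max_right _ _
    have h4 : b ≤ x₀ + ε/2 := min_le_right _ _
    constructor
    · rw [Metric.mem_ball, Real.dist_eq, abs_lt]; constructor <;> linarith
    · exact ⟨by linarith, by linarith⟩
  have hpos : ∀ x ∈ Set.Ioo a b, 0 < (w x)^2 := by
    intro x hx
    have := hball (hsub hx)
    simp only [Set.mem_preimage, Set.mem_compl_iff, Set.mem_singleton_iff] at this
    positivity
  have hIccab : Set.Icc a b ⊆ Set.Icc 0 c := Set.Icc_subset_Icc h0a hbc'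
  have hintab : IntervalIntegrable (fun x => (w x)^2) MeasureTheory.volume a b :=
    (((hwc.mul hwc).congr (fun x _ => by rw [Pi.mul_apply]; ring)).mono hIccab).intervalIntegrable_of_Icc hab.le
  have hint0a : IntervalIntegrable (fun x => (w x)^2) MeasureTheory.volume 0 a :=
    (((hwc.mul hwc).congr (fun x _ => by rw [Pi.mul_apply]; ring)).mono
      (Set.Icc_subset_Icc le_rfl (hab.le.trans hbc'))).intervalIntegrable_of_Icc h0a
  have hintbc : IntervalIntegrable (fun x => (w x)^2) MeasureTheory.volume b c :=
    (((hwc.mul hwc).congr (fun x _ => by rw [Pi.mul_apply]; ring)).mono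
      (Set.Icc_subset_Icc (h0a.trans hab.le) le_rfl)).intervalIntegrable_of_Icc hbc'
  have hint0b : IntervalIntegrable (fun x => (w x)^2) MeasureTheory.volume 0 b :=
    hint0a.trans hintab
  have hsplit1 : (∫ x in (0:ℝ)..a, (w x)^2) + (∫ x in a..b, (w x)^2)
      = ∫ x in (0:ℝ)..b, (w x)^2 :=
    intervalIntegral.integral_add_adjacent_intervals hint0a hintab
  have hsplit2 : (∫ x in (0:ℝ)..b, (w x)^2) + (∫ x in b..c, (w x)^2)
      = ∫ x in (0:ℝ)..c, (w x)^2 :=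
    intervalIntegral.integral_add_adjacent_intervals hint0b hintbc
  have hmid : 0 < ∫ x in a..b, (w x)^2 :=
    intervalIntegral.intervalIntegral_pos_of_pos_on hintab hpos hab
  have hleft : 0 ≤ ∫ x in (0:ℝ)..a, (w x)^2 :=
    intervalIntegral.integral_nonneg h0a (fun u _ => sq_nonneg _)
  have hright : 0 ≤ ∫ x in b..c, (w x)^2 :=
    intervalIntegral.integral_nonneg hbc' (fun u _ => sq_nonneg _)
  linarith
end

section
/- (Symmetry and concavity of the ODE solution.) Let c > 0 and let y : [0, c] → ℝ be twice continuously differentiable, strictly positive on [0, c], satisfying y''(x) = −2/(c·y(x)) + y(x) for all x ∈ [0, c] and the boundary conditions y'(0) = y(0), y'(c) = −y(c). Then y is symmetric about the midpoint, i.e. y(c − x) = y(x) for all x ∈ [0, c], and y is concave, i.e. y''(x) ≤ 0 for all x ∈ [0, c]. -/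
open Set Filter Topology

private lemma Icc_mem_nhdsWithin_Ici_of_Ico {a b x : ℝ} (hx : x ∈ Set.Ico a b) :
    Set.Icc a b ∈ 𝓝[Set.Ici x] x := by
  refine Filter.mem_of_superset (Icc_mem_nhdsGE hx.2) ?_
  exact fun z hz => ⟨hx.1.trans hz.1, hz.2⟩

set_option maxHeartbeats 1000000 in
/-- **Symmetry and concavity of the ODE solution:** a strictly positive, twice
continuously differentiable solution of `y'' = −2/(c y) + y` on `[0, c]` with
`y'(0) = y(0)` and `y'(c) = −y(c)` is symmetric about the midpoint and concave. -/
theorem ode_bvp_symmetric_concave (c : ℝ) (hc : 0 < c)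
    (y y' y'' : ℝ → ℝ)
    (hd : ∀ x ∈ Set.Icc (0:ℝ) c, HasDerivWithinAt y (y' x) (Set.Icc 0 c) x)
    (hd' : ∀ x ∈ Set.Icc (0:ℝ) c, HasDerivWithinAt y' (y'' x) (Set.Icc 0 c) x)
    (hcont : ContinuousOn y'' (Set.Icc 0 c))
    (hpos : ∀ x ∈ Set.Icc (0:ℝ) c, 0 < y x)
    (hode : ∀ x ∈ Set.Icc (0:ℝ) c, y'' x = -2 / (c * y x) + y x)
    (hbc0 : y' 0 = y 0) (hbcc : y' c = -y c) :
    (∀ x ∈ Set.Icc (0:ℝ) c, y (c - x) = y x) ∧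
    (∀ x ∈ Set.Icc (0:ℝ) c, y'' x ≤ 0) := by
  have h0I : (0:ℝ) ∈ Set.Icc (0:ℝ) c := ⟨le_refl 0, hc.le⟩
  have hcI : c ∈ Set.Icc (0:ℝ) c := ⟨hc.le, le_refl c⟩
  have hcy : ContinuousOn y (Set.Icc 0 c) := fun x hx => (hd x hx).continuousWithinAt
  have hcy' : ContinuousOn y' (Set.Icc 0 c) := fun x hx => (hd' x hx).continuousWithinAt
  -- the reflection x ↦ c - x maps the interval to itself
  have hmaps : Set.MapsTo (fun x : ℝ => c - x) (Set.Icc 0 c) (Set.Icc 0 c) := by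
    intro z hz
    simp only [Set.mem_Icc] at hz ⊢
    constructor <;> [linarith [hz.2]; linarith [hz.1]]
  -- Step 1 : the energy E = y'^2 - y^2 + (4/c) log y is constant
  set E : ℝ → ℝ := fun x => y' x ^ 2 - y x ^ 2 + (4 / c) * Real.log (y x) with hEdef
  have hEd : ∀ x ∈ Set.Icc (0:ℝ) c, HasDerivWithinAt E 0 (Set.Icc 0 c) x := by
    intro x hx
    have hy0 : y x ≠ 0 := (hpos x hx).ne'
    have h1 : HasDerivWithinAt (fun t => y' t ^ 2) (2 * y' x * y'' x) (Set.Icc 0 c) x := by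
      simpa [mul_comm, mul_assoc, mul_left_comm] using (hd' x hx).fun_pow 2
    have h2 : HasDerivWithinAt (fun t => y t ^ 2) (2 * y x * y' x) (Set.Icc 0 c) x := by
      simpa [mul_comm, mul_assoc, mul_left_comm] using (hd x hx).fun_pow 2
    have h3 : HasDerivWithinAt (fun t => (4 / c) * Real.log (y t))
        ((4 / c) * (y' x / y x)) (Set.Icc 0 c) x :=
      ((hd x hx).log hy0).const_mul _
    have h4 := (h1.sub h2).add h3
    have hz : 2 * y' x * y'' x - 2 * y x * y' x + (4 / c) * (y' x / y x) = 0 := by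
      rw [hode x hx]
      field_simp
      ring
    rw [hz] at h4
    exact h4
  have hEconst : ∀ x ∈ Set.Icc (0:ℝ) c, E x = E 0 := by
    apply constant_of_has_deriv_right_zero
      (fun x hx => (hEd x hx).continuousWithinAt)
    intro x hx
    exact (hEd x ⟨hx.1, hx.2.le⟩).mono_of_mem_nhdsWithin
      (Icc_mem_nhdsWithin_Ici_of_Ico hx)
  -- Step 2 : y 0 = y c
  have hy0c : y 0 = y c := by
    have h := hEconst c hcI
    rw [hEdef] at h
    simp only [hbc0, hbcc] at h
    have hlog : Real.log (y c) = Real.log (y 0) := by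
      have h4c : (4 / c) ≠ 0 := by positivity
      have : (4 / c) * Real.log (y c) = (4 / c) * Real.log (y 0) := by nlinarith [h]
      exact mul_left_cancel₀ h4c this
    have := congrArg Real.exp hlog
    rwa [Real.exp_log (hpos c hcI), Real.exp_log (hpos 0 h0I), eq_comm] at this
  -- Step 3 : symmetry via Grönwall
  set w : ℝ → ℝ := fun x => y x - y (c - x) with hwdef
  set w' : ℝ → ℝ := fun x => y' x + y' (c - x) with hw'def
  have hwD : ∀ x ∈ Set.Icc (0:ℝ) c, HasDerivWithinAt w (w' x) (Set.Icc 0 c) x := by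
    intro x hx
    have hr : HasDerivWithinAt (fun t : ℝ => c - t) (-1) (Set.Icc 0 c) x := by
      simpa using (hasDerivWithinAt_id x (Set.Icc 0 c)).const_sub c
    have := (hd (c - x) (hmaps hx)).comp x hr hmaps
    exact ((hd x hx).sub this).congr_deriv (by simp only [hw'def]; ring)
  have hw'D : ∀ x ∈ Set.Icc (0:ℝ) c,
      HasDerivWithinAt w' (y'' x - y'' (c - x)) (Set.Icc 0 c) x := by
    intro x hx
    have hr : HasDerivWithinAt (fun t : ℝ => c - t) (-1) (Set.Icc 0 c) x := by
      simpa using (hasDerivWithinAt_id x (Set.Icc 0 c)).const_sub c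
    have := (hd' (c - x) (hmaps hx)).comp x hr hmaps
    exact ((hd' x hx).add this).congr_deriv (by ring)
  set q : ℝ → ℝ := fun x => 1 + 2 / (c * y x * y (c - x)) with hqdef
  have hqw : ∀ x ∈ Set.Icc (0:ℝ) c, y'' x - y'' (c - x) = q x * w x := by
    intro x hx
    have h1 := hpos x hx
    have h2 := hpos (c - x) (hmaps hx)
    rw [hode x hx, hode (c - x) (hmaps hx), hqdef, hwdef]
    field_simp
    ring
  -- bound q on the compact interval
  obtain ⟨Q, hQ⟩ : ∃ Q, ∀ x ∈ Set.Icc (0:ℝ) c, ‖q x‖ ≤ Q := by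
    apply isCompact_Icc.exists_bound_of_continuousOn
    apply ContinuousOn.add continuousOn_const
    apply ContinuousOn.div continuousOn_const
    · exact ((continuousOn_const.mul hcy).mul (hcy.comp
        (continuousOn_const.sub continuousOn_id) hmaps))
    · intro x hx
      have h1 := hpos x hx
      have h2 := hpos (c - x) (hmaps hx)
      positivity
  have hQ1 : (1:ℝ) ≤ Q + 1 := by
    have := hQ 0 h0I
    have := norm_nonneg (q 0)
    linarith
  set K : ℝ := Q + 1 with hKdef
  -- f = w^2 + w'^2 satisfies a Grönwall inequality with f 0 = 0
  set f : ℝ → ℝ := fun x => w x ^ 2 + w' x ^ 2 with hfdef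
  have hf0 : f 0 = 0 := by
    have hw0 : w 0 = 0 := by simp [hwdef, hy0c]
    have hw'0 : w' 0 = 0 := by
      simp only [hw'def, sub_zero, hbc0, hbcc, hy0c]; ring
    simp [hfdef, hw0, hw'0]
  have hfD : ∀ x ∈ Set.Icc (0:ℝ) c,
      HasDerivWithinAt f (2 * w x * w' x + 2 * w' x * (q x * w x)) (Set.Icc 0 c) x := by
    intro x hx
    have h1 : HasDerivWithinAt (fun t => w t ^ 2) (2 * w x * w' x) (Set.Icc 0 c) x := by
      simpa [mul_comm, mul_assoc, mul_left_comm] using (hwD x hx).fun_pow 2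
    have h2 : HasDerivWithinAt (fun t => w' t ^ 2) (2 * w' x * (q x * w x)) (Set.Icc 0 c) x := by
      have := (hw'D x hx).fun_pow 2
      rw [hqw x hx] at this
      simpa [mul_comm, mul_assoc, mul_left_comm] using this
    exact h1.add h2
  have hfcont : ContinuousOn f (Set.Icc 0 c) := fun x hx => (hfD x hx).continuousWithinAt
  have hgron := norm_le_gronwallBound_of_norm_deriv_right_le (a := 0) (b := c)
      (δ := 0) (K := 2 * K) (ε := 0) hfcont
      (fun x hx => (hfD x ⟨hx.1, hx.2.le⟩).mono_of_mem_nhdsWithin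
        (Icc_mem_nhdsWithin_Ici_of_Ico hx))
      (by rw [hf0]; simp)
      (by
        intro x hx
        have hx' : x ∈ Set.Icc (0:ℝ) c := ⟨hx.1, hx.2.le⟩
        have hq := hQ x hx'
        simp only [Real.norm_eq_abs] at hq ⊢
        have habs : |q x| ≤ Q := hq
        have hfx : |f x| = f x := abs_of_nonneg (by positivity)
        rw [hfx, add_zero]
        have h1 : |2 * w x * w' x + 2 * w' x * (q x * w x)| ≤
            2 * |w x| * |w' x| + 2 * |w' x| * (|q x| * |w x|) := by
          calc |2 * w x * w' x + 2 * w' x * (q x * w x)| ≤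
              |2 * w x * w' x| + |2 * w' x * (q x * w x)| := abs_add_le _ _
            _ = 2 * |w x| * |w' x| + 2 * |w' x| * (|q x| * |w x|) := by
              simp [abs_mul, abs_of_nonneg, mul_comm, mul_assoc, mul_left_comm]
        have h2 : 2 * |w x| * |w' x| ≤ w x ^ 2 + w' x ^ 2 := by
          nlinarith [sq_abs (w x), sq_abs (w' x), sq_nonneg (|w x| - |w' x|)]
        have h3 : 2 * |w' x| * (|q x| * |w x|) ≤ Q * (w x ^ 2 + w' x ^ 2) := by
          nlinarith [sq_abs (w x), sq_abs (w' x), sq_nonneg (|w x| - |w' x|),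
            abs_nonneg (w x), abs_nonneg (w' x), abs_nonneg (q x),
            mul_nonneg (abs_nonneg (w' x)) (abs_nonneg (w x))]
        calc |2 * w x * w' x + 2 * w' x * (q x * w x)| ≤
            2 * |w x| * |w' x| + 2 * |w' x| * (|q x| * |w x|) := h1
          _ ≤ (w x ^ 2 + w' x ^ 2) + Q * (w x ^ 2 + w' x ^ 2) := add_le_add h2 h3
          _ ≤ 2 * K * f x := by
            simp only [hfdef, hKdef]
            nlinarith [sq_nonneg (w x), sq_nonneg (w' x)])
  have hwzero : ∀ x ∈ Set.Icc (0:ℝ) c, w x = 0 := by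
    intro x hx
    have := hgron x hx
    rw [gronwallBound_ε0_δ0] at this
    have hfx : f x = 0 := by
      have h0 : 0 ≤ f x := by simp only [hfdef]; positivity
      have : |f x| ≤ 0 := by simpa [Real.norm_eq_abs] using this
      rw [abs_of_nonneg h0] at this
      linarith
    have hsq : w x ^ 2 = 0 := by
      have h1 := sq_nonneg (w' x)
      have h2 := sq_nonneg (w x)
      simp only [hfdef] at hfx
      linarith
    exact pow_eq_zero_iff two_ne_zero |>.mp hsq
  have hsymm : ∀ x ∈ Set.Icc (0:ℝ) c, y (c - x) = y x := by
    intro x hx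
    have := hwzero x hx
    simp only [hwdef] at this
    linarith
  refine ⟨hsymm, ?_⟩
  -- Step 4 : concavity
  obtain ⟨m, hm, hmax⟩ := isCompact_Icc.exists_isMaxOn ⟨0, h0I⟩ hcy
  -- m is not an endpoint
  have hm0 : 0 < m := by
    rcases hm.1.lt_or_eq with h | h
    · exact h
    have hmax0 : IsMaxOn y (Set.Icc 0 c) 0 := by rwa [← h] at hmax
    exfalso
    have hs := hd 0 h0I
    rw [hasDerivWithinAt_iff_tendsto_slope] at hs
    have hIoc : Set.Icc (0:ℝ) c \ {0} = Set.Ioc 0 c := by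
      ext z; simp only [Set.mem_diff, Set.mem_Icc, Set.mem_singleton_iff, Set.mem_Ioc]
      constructor
      · rintro ⟨⟨h1, h2⟩, h3⟩; exact ⟨lt_of_le_of_ne h1 (Ne.symm h3), h2⟩
      · rintro ⟨h1, h2⟩; exact ⟨⟨h1.le, h2⟩, h1.ne'⟩
    rw [hIoc] at hs
    have hne : (𝓝[Set.Ioc (0:ℝ) c] 0).NeBot := by
      rw [← mem_closure_iff_nhdsWithin_neBot, closure_Ioc hc.ne]
      exact h0I
    have hev : ∀ᶠ z in 𝓝[Set.Ioc (0:ℝ) c] 0, 0 < slope y 0 z :=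
      hs.eventually (eventually_gt_nhds (by rw [hbc0]; exact hpos 0 h0I))
    obtain ⟨z, hz, hsl⟩ := (hev.and self_mem_nhdsWithin).exists
    rw [slope_def_field, sub_zero] at hz
    have hz0 : (0:ℝ) < z := hsl.1
    have : 0 < y z - y 0 := by
      have h2 := mul_pos hz hz0
      rwa [div_mul_cancel₀ _ hz0.ne'] at h2
    have := hmax0 ⟨hz0.le, hsl.2⟩
    simp only [Set.mem_setOf_eq] at this
    linarith
  have hmc : m < c := by
    rcases hm.2.lt_or_eq with h | h
    · exact h
    have hmaxc : IsMaxOn y (Set.Icc 0 c) c := by rwa [h] at hmax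
    exfalso
    have hs := hd c hcI
    rw [hasDerivWithinAt_iff_tendsto_slope] at hs
    have hIco : Set.Icc (0:ℝ) c \ {c} = Set.Ico 0 c := by
      ext z; simp only [Set.mem_diff, Set.mem_Icc, Set.mem_singleton_iff, Set.mem_Ico]
      constructor
      · rintro ⟨⟨h1, h2⟩, h3⟩; exact ⟨h1, lt_of_le_of_ne h2 h3⟩
      · rintro ⟨h1, h2⟩; exact ⟨⟨h1, h2.le⟩, h2.ne⟩
    rw [hIco] at hs
    have hne : (𝓝[Set.Ico (0:ℝ) c] c).NeBot := by
      rw [← mem_closure_iff_nhdsWithin_neBot, closure_Ico hc.ne]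
      exact hcI
    have hev : ∀ᶠ z in 𝓝[Set.Ico (0:ℝ) c] c, slope y c z < 0 :=
      hs.eventually (eventually_lt_nhds (by rw [hbcc]; linarith [hpos c hcI]))
    obtain ⟨z, hz, hsl⟩ := (hev.and self_mem_nhdsWithin).exists
    rw [slope_def_field] at hz
    have hzc : z - c < 0 := by linarith [hsl.2]
    have : 0 < y z - y c := by
      have h2 := mul_pos_of_neg_of_neg hz hzc
      rw [div_mul_cancel₀ _ (by linarith : z - c ≠ 0)] at h2
      exact h2
    have := hmaxc ⟨hsl.1, hsl.2.le⟩
    simp only [Set.mem_setOf_eq] at this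
    linarith
  have hInhds : Set.Icc (0:ℝ) c ∈ 𝓝 m := Icc_mem_nhds hm0 hmc
  have hdam : HasDerivAt y (y' m) m := (hd m hm).hasDerivAt hInhds
  have hy'm : y' m = 0 := (hmax.isLocalMax hInhds).hasDerivAt_eq_zero hdam
  -- second derivative at the max is ≤ 0
  have h2nd : y'' m ≤ 0 := by
    by_contra hpos2
    push_neg at hpos2
    have hev : ∀ᶠ z in 𝓝[Set.Icc (0:ℝ) c] m, 0 < y'' z :=
      (hcont m hm).eventually (eventually_gt_nhds hpos2)
    rw [eventually_nhdsWithin_iff] at hev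
    obtain ⟨ε, hε, hball⟩ := Metric.eventually_nhds_iff.mp hev
    set b : ℝ := min c (m + ε / 2) with hbdef
    have hmb : m < b := lt_min hmc (by linarith)
    have hsub : Set.Icc m b ⊆ Set.Icc (0:ℝ) c := fun z hz =>
      ⟨hm0.le.trans hz.1, hz.2.trans (min_le_left _ _)⟩
    have hy''pos : ∀ z ∈ Set.Icc m b, 0 < y'' z := by
      intro z hz
      apply hball _ (hsub hz)
      rw [Real.dist_eq, abs_of_nonneg (by linarith [hz.1])]
      have := hz.2.trans (min_le_right c (m + ε / 2))
      linarith
    -- y' is strictly monotone on [m, b]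
    have hmono' : StrictMonoOn y' (Set.Icc m b) := by
      apply strictMonoOn_of_deriv_pos (convex_Icc m b) (hcy'.mono hsub)
      intro z hz
      rw [interior_Icc] at hz
      have hzI : z ∈ Set.Icc (0:ℝ) c := hsub ⟨hz.1.le, hz.2.le⟩
      have hzm : Set.Icc (0:ℝ) c ∈ 𝓝 z :=
        Icc_mem_nhds (lt_of_lt_of_le hm0 hz.1.le) (lt_of_lt_of_le hz.2 (min_le_left _ _))
      have := ((hd' z hzI).hasDerivAt hzm).deriv
      rw [this]
      exact hy''pos z ⟨hz.1.le, hz.2.le⟩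
    have hy'pos : ∀ z ∈ Set.Ioo m b, 0 < y' z := by
      intro z hz
      have := hmono' ⟨le_refl m, hmb.le⟩ ⟨hz.1.le, hz.2.le⟩ hz.1
      rwa [hy'm] at this
    have hmono : StrictMonoOn y (Set.Icc m b) := by
      apply strictMonoOn_of_deriv_pos (convex_Icc m b) (hcy.mono hsub)
      intro z hz
      rw [interior_Icc] at hz
      have hzI : z ∈ Set.Icc (0:ℝ) c := hsub ⟨hz.1.le, hz.2.le⟩
      have hzm : Set.Icc (0:ℝ) c ∈ 𝓝 z :=
        Icc_mem_nhds (lt_of_lt_of_le hm0 hz.1.le) (lt_of_lt_of_le hz.2 (min_le_left _ _))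
      have := ((hd z hzI).hasDerivAt hzm).deriv
      rw [this]
      exact hy'pos z hz
    have hlt : y m < y b := hmono ⟨le_refl m, hmb.le⟩ ⟨hmb.le, le_refl b⟩ hmb
    have := hmax (hsub ⟨hmb.le, le_refl b⟩)
    simp only [Set.mem_setOf_eq] at this
    linarith
  -- from y''(m) ≤ 0 deduce c * y(m)^2 ≤ 2
  have hym : 0 < y m := hpos m hm
  have hkey : c * y m ^ 2 ≤ 2 := by
    have h := h2nd
    rw [hode m hm] at h
    have heq : -2 / (c * y m) + y m = (c * y m ^ 2 - 2) / (c * y m) := by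
      field_simp; ring
    rw [heq] at h
    have hden : 0 < c * y m := by positivity
    nlinarith [div_nonpos_iff.mp h, (div_le_iff₀ hden).mp h]
  intro x hx
  rw [hode x hx]
  have hyx : 0 < y x := hpos x hx
  have hle : y x ≤ y m := hmax hx
  have heq : -2 / (c * y x) + y x = (c * y x ^ 2 - 2) / (c * y x) := by
    field_simp; ring
  rw [heq]
  apply div_nonpos_of_nonpos_of_nonneg
  · have hsq : y x ^ 2 ≤ y m ^ 2 := pow_le_pow_left₀ hyx.le hle 2
    have h2 := mul_le_mul_of_nonneg_left hsq hc.le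
    linarith
  · positivity
end
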